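/- arXiv:1202.3179 — 5 statements merged into one kernel-verified Lean document; each statement's English description precedes it below -/
import Mathlib

section
/- Let X_1, …, X_n (n ≥ 1) be independent random variables on a probability space, each taking values in {0,1}, with 0 < P[X_i = 1] = p_i < 1 for every i. Let X = X_1 + ⋯ + X_n and μ = E[X] = p_1 + ⋯ + p_n. Then for every real θ ∈ (0,1], P[X < (1−θ)·μ] < (e^{−θ}/(1−θ)^{1−θ})^μ, where 0⁰ is interpreted as 1. -/
/-!
Chernoff's method: for `t = log (1 - θ) < 0`, Markov's inequality applied to `exp (t X)` bounds
`P[X ≤ (1 - θ) μ]` by `exp (-t (1 - θ) μ) · E[exp (t X)]`. By independence the moment generating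
function factors, and a trial with success probability `p` contributes
`1 + p (eᵗ - 1) < exp (p (eᵗ - 1))`, strictly since `p > 0` and `eᵗ ≠ 1`. Multiplying out gives
`exp (-(1 - θ) log (1 - θ) μ - θ μ)`, which is the claimed bound. For `θ = 1` the event is empty.
-/

open MeasureTheory ProbabilityTheory Real

namespace ProbabilityTheory

variable {Ω : Type*} {X : Ω → ℝ}

lemma exp_mul_eq_one_add_indicator (hval : ∀ ω, X ω = 0 ∨ X ω = 1) (t : ℝ) :
    (fun ω => exp (t * X ω)) =
      fun ω => 1 + {ω | X ω = 1}.indicator (fun _ => exp t - 1) ω := by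
  funext ω
  rcases hval ω with h | h <;> simp [h]

variable [MeasurableSpace Ω] {μ : Measure Ω}

lemma integrable_exp_mul_of_eq_zero_or_eq_one [IsFiniteMeasure μ] (hX : Measurable X)
    (hval : ∀ ω, X ω = 0 ∨ X ω = 1) (t : ℝ) :
    Integrable (fun ω => exp (t * X ω)) μ := by
  rw [exp_mul_eq_one_add_indicator hval]
  exact (integrable_const 1).add
    ((integrable_const _).indicator (hX (measurableSet_singleton 1)))

lemma mgf_of_eq_zero_or_eq_one [IsProbabilityMeasure μ] (hX : Measurable X)
    (hval : ∀ ω, X ω = 0 ∨ X ω = 1) (t : ℝ) :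
    mgf X μ t = 1 + μ.real {ω | X ω = 1} * (exp t - 1) := by
  have hs : MeasurableSet {ω | X ω = 1} := hX (measurableSet_singleton 1)
  rw [mgf, exp_mul_eq_one_add_indicator hval,
    integral_add (integrable_const 1) ((integrable_const _).indicator hs),
    integral_indicator_const _ hs, integral_const, probReal_univ, smul_eq_mul, smul_eq_mul, one_mul]

lemma measureReal_sum_le_lt_of_eq_zero_or_eq_one [IsProbabilityMeasure μ]
    {ι : Type*} [Fintype ι] [Nonempty ι] {X : ι → Ω → ℝ}
    (hmeas : ∀ i, Measurable (X i)) (hindep : iIndepFun X μ)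
    (hval : ∀ i ω, X i ω = 0 ∨ X i ω = 1) (hpos : ∀ i, 0 < μ.real {ω | X i ω = 1})
    {t : ℝ} (ht : t < 0) (a : ℝ) :
    μ.real {ω | ∑ i, X i ω ≤ a} <
      exp (-t * a + (exp t - 1) * ∑ i, μ.real {ω | X i ω = 1}) := by
  have hint : Integrable (fun ω => exp (t * (∑ i, X i) ω)) μ :=
    hindep.integrable_exp_mul_sum hmeas
      fun i _ => integrable_exp_mul_of_eq_zero_or_eq_one (hmeas i) (hval i) t
  have hfactor (i : ι) : mgf (X i) μ t < exp (μ.real {ω | X i ω = 1} * (exp t - 1)) := by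
    rw [mgf_of_eq_zero_or_eq_one (hmeas i) (hval i), add_comm]
    refine add_one_lt_exp (mul_ne_zero (hpos i).ne' ?_)
    linarith [exp_lt_one_iff.mpr ht]
  calc μ.real {ω | ∑ i, X i ω ≤ a}
      ≤ exp (-t * a) * mgf (∑ i, X i) μ t := by
        simpa only [Finset.sum_apply] using measure_le_le_exp_mul_mgf a ht.le hint
    _ = exp (-t * a) * ∏ i, mgf (X i) μ t := by rw [hindep.mgf_sum hmeas]
    _ < exp (-t * a) * ∏ i, exp (μ.real {ω | X i ω = 1} * (exp t - 1)) := by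
        gcongr
        exact Finset.prod_lt_prod_of_nonempty
          (fun i _ => mgf_pos (integrable_exp_mul_of_eq_zero_or_eq_one (hmeas i) (hval i) t))
          (fun i _ => hfactor i) Finset.univ_nonempty
    _ = exp (-t * a + (exp t - 1) * ∑ i, μ.real {ω | X i ω = 1}) := by
        rw [← exp_sum, ← exp_add, ← Finset.sum_mul, mul_comm (exp t - 1)]

end ProbabilityTheory

lemma chernoff_lower_bound_eq_exp {θ : ℝ} (hθ : θ < 1) (m : ℝ) :
    (exp (-θ) / (1 - θ) ^ (1 - θ)) ^ m =
      exp (-log (1 - θ) * ((1 - θ) * m) + (exp (log (1 - θ)) - 1) * m) := by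
  have h1θ : 0 < 1 - θ := by linarith
  rw [rpow_def_of_pos h1θ, ← exp_sub, ← exp_mul, exp_log h1θ]
  ring_nf

theorem chernoff_lower_tail_general
    {Ω : Type*} [MeasureSpace Ω] [IsProbabilityMeasure (ℙ : Measure Ω)]
    (n : ℕ) (hn : 1 ≤ n)
    (X : Fin n → Ω → ℝ)
    (hmeas : ∀ i, Measurable (X i))
    (hindep : iIndepFun X ℙ)
    (hval : ∀ i ω, X i ω = 0 ∨ X i ω = 1)
    (pr : Fin n → ℝ)
    (hpr : ∀ i, (ℙ {ω | X i ω = 1}).toReal = pr i)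
    (hpr0 : ∀ i, 0 < pr i)
    (μ : ℝ) (hμ : μ = ∑ i, pr i)
    (θ : ℝ) (hθ0 : 0 < θ) (hθ1 : θ ≤ 1) :
    (ℙ {ω | (∑ i, X i ω) < (1 - θ) * μ}).toReal <
      (Real.exp (-θ) / (1 - θ) ^ (1 - θ)) ^ μ := by
  rcases hθ1.lt_or_eq with hθ1 | rfl
  · have : Nonempty (Fin n) := ⟨⟨0, hn⟩⟩
    have hpos (i : Fin n) : 0 < volume.real {ω | X i ω = 1} := by
      rw [measureReal_def, hpr]; exact hpr0 i
    have ht : log (1 - θ) < 0 := log_neg (by linarith) (by linarith)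
    calc volume.real {ω | ∑ i, X i ω < (1 - θ) * μ}
        ≤ volume.real {ω | ∑ i, X i ω ≤ (1 - θ) * μ} :=
          measureReal_mono (Set.ofPred_subset_ofPred.mpr fun _ ↦ le_of_lt)
      _ < _ := measureReal_sum_le_lt_of_eq_zero_or_eq_one hmeas hindep hval hpos ht _
      _ = _ := by
        rw [chernoff_lower_bound_eq_exp hθ1, hμ]
        simp only [← hpr, measureReal_def]
  · have hsum_nonneg (ω : Ω) : 0 ≤ ∑ i, X i ω :=
      Finset.sum_nonneg fun i _ => (hval i ω).elim (·.ge) (·.symm ▸ zero_le_one)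
    have hempty : {ω | ∑ i, X i ω < (1 - 1) * μ} = ∅ :=
      Set.eq_empty_of_forall_notMem fun ω h => (hsum_nonneg ω).not_gt (by simpa using h)
    rw [hempty, measure_empty, ENNReal.toReal_zero, sub_self, rpow_zero, div_one]
    positivity

/-- Theorem 4.5, Equation (3) (Chernoff lower tail): for independent Poisson trials
`X_1,…,X_n` with `0 < P[X_i = 1] = p_i < 1`, `X = ∑ X_i`, and `μ = ∑ p_i = E[X]`,
for every `θ ∈ (0,1]`, `P[X < (1−θ)·μ] < (e^{−θ}/(1−θ)^{1−θ})^μ`, where the powers are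
real exponentiation (so `0⁰ = 1`). -/
theorem chernoff_lower_tail
    {Ω : Type*} [MeasureSpace Ω] [IsProbabilityMeasure (ℙ : Measure Ω)]
    (n : ℕ) (hn : 1 ≤ n)
    (X : Fin n → Ω → ℝ)
    (hmeas : ∀ i, Measurable (X i))
    (hindep : iIndepFun X ℙ)
    (hval : ∀ i ω, X i ω = 0 ∨ X i ω = 1)
    (pr : Fin n → ℝ)
    (hpr : ∀ i, (ℙ {ω | X i ω = 1}).toReal = pr i)
    (hpr0 : ∀ i, 0 < pr i) (hpr1 : ∀ i, pr i < 1)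
    (μ : ℝ) (hμ : μ = ∑ i, pr i)
    (θ : ℝ) (hθ0 : 0 < θ) (hθ1 : θ ≤ 1) :
    (ℙ {ω | (∑ i, X i ω) < (1 - θ) * μ}).toReal <
      (Real.exp (-θ) / (1 - θ) ^ (1 - θ)) ^ μ :=
  chernoff_lower_tail_general n hn X hmeas hindep hval pr hpr hpr0 μ hμ θ hθ0 hθ1
end

section
/- Let p ∈ (0,1), let m ≥ 2 be an integer, let n ≥ 1 and 1 ≤ k ≤ n be integers with f = k/n. Let X_1, …, X_n be independent {0,1}-valued random variables on a probability space, exactly k of which satisfy P[X_j = 1] = p + (1-p)/m and the remaining n−k of which satisfy P[X_j = 1] = (1-p)/m. Let O* = X_1 + ⋯ + X_n, μ = n·(f·p + (1-p)/m), and F' = (O*/n − (1-p)/m)/p. Then for every ε > 0 such that θ = ε·n·p·f/μ satisfies θ ∈ (0,1], P[(F' − f)/f < −ε] < (e^{−θ}/(1−θ)^{1−θ})^μ, where 0⁰ is interpreted as 1. -/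
set_option autoImplicit false

open MeasureTheory ProbabilityTheory Real

/-!
Unfolding `F'`, the event `(F' - f) / f < -ε` is exactly `O* < (1 - θ) μ`, and `μ` is the sum of
the success probabilities `q_j` of the indicators. An indicator has moment generating function
`1 + (eᵗ - 1) q_j < exp ((eᵗ - 1) q_j)`, so by independence `E[e^{t O*}] < exp ((eᵗ - 1) μ)`.
For `θ < 1`, Chernoff's bound at `t = log (1 - θ) < 0` turns this into
`P[O* ≤ (1 - θ) μ] < exp (-t (1 - θ) μ - θ μ) = (e^{-θ} / (1 - θ)^{1 - θ})^μ`.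
For `θ = 1` the event `O* < 0` is empty while the bound is `e^{-μ} > 0`.
-/

section ZeroOneValued

variable {Ω : Type*} [MeasurableSpace Ω] {P : Measure Ω} [IsProbabilityMeasure P] {X : Ω → ℝ}

lemma mgf_eq_of_zero_one (hX : Measurable X) (hval : ∀ ω, X ω = 0 ∨ X ω = 1) (t : ℝ) :
    mgf X P t = 1 + (exp t - 1) * P.real {ω | X ω = 1} := by
  have hs : MeasurableSet {ω | X ω = 1} := hX (measurableSet_singleton 1)
  have hexp : (fun ω ↦ exp (t * X ω)) =
      fun ω ↦ 1 + (exp t - 1) * {ω | X ω = 1}.indicator 1 ω := by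
    funext ω
    rcases hval ω with h | h <;> simp [h]
  rw [mgf, hexp,
    integral_add (integrable_const 1) (((integrable_const 1).indicator hs).const_mul _),
    integral_const_mul, integral_indicator_one hs]
  simp

lemma mgf_pos_of_zero_one (hX : Measurable X) (hval : ∀ ω, X ω = 0 ∨ X ω = 1) (t : ℝ) :
    0 < mgf X P t := by
  rw [mgf_eq_of_zero_one hX hval]
  have hq : P.real {ω | X ω = 1} ≤ 1 := measureReal_le_one
  rcases hq.lt_or_eq with hq | hq
  · nlinarith [exp_pos t, measureReal_nonneg (μ := P) (s := {ω | X ω = 1})]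
  · simp [hq, exp_pos]

lemma mgf_lt_exp_of_zero_one (hX : Measurable X) (hval : ∀ ω, X ω = 0 ∨ X ω = 1)
    (hpos : 0 < P.real {ω | X ω = 1}) {t : ℝ} (ht : t ≠ 0) :
    mgf X P t < exp ((exp t - 1) * P.real {ω | X ω = 1}) := by
  have hne : (exp t - 1) * P.real {ω | X ω = 1} ≠ 0 :=
    mul_ne_zero (sub_ne_zero.mpr ((exp_eq_one_iff t).not.mpr ht)) hpos.ne'
  rw [mgf_eq_of_zero_one hX hval]
  linarith [add_one_lt_exp hne]

end ZeroOneValued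

section PoissonTrials

variable {Ω ι : Type*} [MeasurableSpace Ω] {P : Measure Ω} [Fintype ι] [Nonempty ι]
  {X : ι → Ω → ℝ}

lemma mgf_sum_lt_exp_of_zero_one (hmeas : ∀ j, Measurable (X j)) (hindep : iIndepFun X P)
    (hval : ∀ j ω, X j ω = 0 ∨ X j ω = 1) (hpos : ∀ j, 0 < P.real {ω | X j ω = 1})
    {t : ℝ} (ht : t ≠ 0) :
    mgf (∑ j, X j) P t < exp ((exp t - 1) * ∑ j, P.real {ω | X j ω = 1}) := by
  have := hindep.isProbabilityMeasure
  rw [hindep.mgf_sum hmeas, Finset.mul_sum, exp_sum]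
  exact Finset.prod_lt_prod_of_nonempty (fun j _ ↦ mgf_pos_of_zero_one (hmeas j) (hval j) t)
    (fun j _ ↦ mgf_lt_exp_of_zero_one (hmeas j) (hval j) (hpos j) ht) Finset.univ_nonempty

theorem chernoff_lower_tail_zero_one_of_lt_one (hmeas : ∀ j, Measurable (X j))
    (hindep : iIndepFun X P) (hval : ∀ j ω, X j ω = 0 ∨ X j ω = 1)
    (hpos : ∀ j, 0 < P.real {ω | X j ω = 1}) {θ : ℝ} (hθ0 : 0 < θ) (hθ1 : θ < 1) :
    P.real {ω | ∑ j, X j ω < (1 - θ) * ∑ j, P.real {ω | X j ω = 1}} <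
      (exp (-θ) / (1 - θ) ^ (1 - θ)) ^ ∑ j, P.real {ω | X j ω = 1} := by
  set μ := ∑ j, P.real {ω | X j ω = 1}
  have := hindep.isProbabilityMeasure
  set t := log (1 - θ) with ht_def
  have hexp_t : exp t = 1 - θ := exp_log (by linarith)
  have ht : t < 0 := log_neg (by linarith) (by linarith)
  have hint : Integrable (fun ω ↦ exp (t * (∑ j, X j) ω)) P :=
    mgf_pos_iff.mp <| by
      rw [hindep.mgf_sum hmeas]
      exact Finset.prod_pos fun j _ ↦ mgf_pos_of_zero_one (hmeas j) (hval j) t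
  have hrhs : (exp (-θ) / (1 - θ) ^ (1 - θ)) ^ μ =
      exp (-t * ((1 - θ) * μ)) * exp ((exp t - 1) * μ) := by
    rw [rpow_def_of_pos (x := 1 - θ) (by linarith), ← ht_def, ← exp_sub, ← exp_mul, ← exp_add,
      hexp_t]
    ring_nf
  calc P.real {ω | ∑ j, X j ω < (1 - θ) * μ}
      ≤ P.real {ω | ∑ j, X j ω ≤ (1 - θ) * μ} :=
        measureReal_mono (Set.ofPred_subset_ofPred.mpr fun _ ↦ le_of_lt)
    _ ≤ exp (-t * ((1 - θ) * μ)) * mgf (∑ j, X j) P t := by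
      simpa only [Finset.sum_apply] using measure_le_le_exp_mul_mgf _ ht.le hint
    _ < exp (-t * ((1 - θ) * μ)) * exp ((exp t - 1) * μ) := by
      gcongr
      exact mgf_sum_lt_exp_of_zero_one hmeas hindep hval hpos ht.ne
    _ = _ := hrhs.symm

theorem chernoff_lower_tail_zero_one (hmeas : ∀ j, Measurable (X j))
    (hindep : iIndepFun X P) (hval : ∀ j ω, X j ω = 0 ∨ X j ω = 1)
    (hpos : ∀ j, 0 < P.real {ω | X j ω = 1}) {θ : ℝ} (hθ0 : 0 < θ) (hθ1 : θ ≤ 1) :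
    P.real {ω | ∑ j, X j ω < (1 - θ) * ∑ j, P.real {ω | X j ω = 1}} <
      (exp (-θ) / (1 - θ) ^ (1 - θ)) ^ ∑ j, P.real {ω | X j ω = 1} := by
  rcases hθ1.lt_or_eq with hθ1 | rfl
  · exact chernoff_lower_tail_zero_one_of_lt_one hmeas hindep hval hpos hθ0 hθ1
  have hempty : {ω | ∑ j, X j ω < (1 - 1) * ∑ j, P.real {ω | X j ω = 1}} = ∅ := by
    simpa [Set.eq_empty_iff_forall_notMem] using fun ω ↦
      Finset.sum_nonneg fun j _ ↦ by rcases hval j ω with h | h <;> simp [h]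
  rw [hempty, measureReal_empty]
  simp only [sub_self, rpow_zero, div_one]
  positivity

end PoissonTrials

theorem mle_lower_tail_bound_general
    {Ω : Type*} [MeasureSpace Ω] [IsProbabilityMeasure (ℙ : Measure Ω)]
    (p : ℝ) (hp0 : 0 < p) (hp1 : p < 1)
    (m : ℕ) (hm : 2 ≤ m)
    (n k : ℕ) (hn : 1 ≤ n) (hk1 : 1 ≤ k)
    (f : ℝ) (hf : f = (k : ℝ) / n)
    (X : Fin n → Ω → ℝ)
    (hmeas : ∀ j, Measurable (X j))
    (hindep : iIndepFun X ℙ)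
    (hval : ∀ j ω, X j ω = 0 ∨ X j ω = 1)
    (K : Finset (Fin n)) (hKcard : K.card = k)
    (hin : ∀ j ∈ K, (ℙ {ω | X j ω = 1}).toReal = p + (1 - p) / m)
    (hout : ∀ j ∉ K, (ℙ {ω | X j ω = 1}).toReal = (1 - p) / m)
    (O : Ω → ℝ) (hO : ∀ ω, O ω = ∑ j, X j ω)
    (μ : ℝ) (hμ : μ = n * (f * p + (1 - p) / m))
    (F' : Ω → ℝ) (hF' : ∀ ω, F' ω = (O ω / n - (1 - p) / m) / p)
    (ε : ℝ)
    (θ : ℝ) (hθ : θ = ε * n * p * f / μ) (hθ0 : 0 < θ) (hθ1 : θ ≤ 1) :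
    (ℙ {ω | (F' ω - f) / f < -ε}).toReal <
      (Real.exp (-θ) / (1 - θ) ^ (1 - θ)) ^ μ := by
  have hm0 : (0 : ℝ) < m := by exact_mod_cast (by omega : 0 < m)
  have hn0 : (0 : ℝ) < n := by exact_mod_cast hn
  have hf0 : 0 < f := by rw [hf]; exact div_pos (by exact_mod_cast hk1) hn0
  set P : Measure Ω := ℙ
  have hq : ∀ j, P.real {ω | X j ω = 1} = (1 - p) / m + if j ∈ K then p else 0 := by
    intro j
    by_cases hj : j ∈ K
    · rw [measureReal_def, hin j hj, if_pos hj, add_comm]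
    · rw [measureReal_def, hout j hj, if_neg hj, add_zero]
  have hsum : ∑ j, P.real {ω | X j ω = 1} = μ := by
    simp only [hq, Finset.sum_add_distrib, Finset.sum_ite_mem, Finset.univ_inter, Finset.sum_const,
      Finset.card_univ, Fintype.card_fin, hKcard, nsmul_eq_mul, hμ, hf]
    field_simp
    ring
  have hθμ : θ * μ = ε * n * p * f := by
    rw [hθ]
    field_simp [show μ ≠ 0 by rw [hμ]; positivity]
  have hevent : {ω | (F' ω - f) / f < -ε} =
      {ω | ∑ j, X j ω < (1 - θ) * ∑ j, P.real {ω | X j ω = 1}} := by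
    ext ω
    rw [Set.mem_ofPred_eq, Set.mem_ofPred_eq, hF', ← hO, hsum,
      show (1 - θ) * μ = ((-ε * f + f) * p + (1 - p) / m) * n by linear_combination hμ - hθμ,
      div_lt_iff₀ hf0, sub_lt_iff_lt_add, div_lt_iff₀ hp0, sub_lt_iff_lt_add, div_lt_iff₀ hn0]
  have hpos : ∀ j, 0 < P.real {ω | X j ω = 1} := fun j ↦ by
    rw [hq j]
    have : 0 < 1 - p := by linarith
    split_ifs <;> positivity
  have : Nonempty (Fin n) := ⟨⟨0, hn⟩⟩
  rw [← hsum]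
  exact hevent ▸ chernoff_lower_tail_zero_one hmeas hindep hval hpos hθ0 hθ1

/-- Corollary 4.6, lower tail with the full Chernoff bound: for the observed count
`O* = ∑ X_j` of independent perturbation indicators (k of success probability
`p + (1-p)/m`, `n−k` of success probability `(1-p)/m`), `μ = n·(f·p + (1-p)/m)`,
`f = k/n`, and MLE `F' = (O*/n − (1-p)/m)/p`, for every `ε > 0` with
`θ = ε·n·p·f/μ ∈ (0,1]`, `P[(F' − f)/f < −ε] < (e^{−θ}/(1−θ)^{1−θ})^μ`
(real exponentiation, so `0⁰ = 1`). -/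
theorem mle_lower_tail_bound
    {Ω : Type*} [MeasureSpace Ω] [IsProbabilityMeasure (ℙ : Measure Ω)]
    (p : ℝ) (hp0 : 0 < p) (hp1 : p < 1)
    (m : ℕ) (hm : 2 ≤ m)
    (n k : ℕ) (hn : 1 ≤ n) (hk1 : 1 ≤ k) (hkn : k ≤ n)
    (f : ℝ) (hf : f = (k : ℝ) / n)
    (X : Fin n → Ω → ℝ)
    (hmeas : ∀ j, Measurable (X j))
    (hindep : iIndepFun X ℙ)
    (hval : ∀ j ω, X j ω = 0 ∨ X j ω = 1)
    (K : Finset (Fin n)) (hKcard : K.card = k)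
    (hin : ∀ j ∈ K, (ℙ {ω | X j ω = 1}).toReal = p + (1 - p) / m)
    (hout : ∀ j ∉ K, (ℙ {ω | X j ω = 1}).toReal = (1 - p) / m)
    (O : Ω → ℝ) (hO : ∀ ω, O ω = ∑ j, X j ω)
    (μ : ℝ) (hμ : μ = n * (f * p + (1 - p) / m))
    (F' : Ω → ℝ) (hF' : ∀ ω, F' ω = (O ω / n - (1 - p) / m) / p)
    (ε : ℝ) (hε : 0 < ε)
    (θ : ℝ) (hθ : θ = ε * n * p * f / μ) (hθ0 : 0 < θ) (hθ1 : θ ≤ 1) :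
    (ℙ {ω | (F' ω - f) / f < -ε}).toReal <
      (Real.exp (-θ) / (1 - θ) ^ (1 - θ)) ^ μ :=
  mle_lower_tail_bound_general p hp0 hp1 m hm n k hn hk1 f hf X hmeas hindep hval K hKcard hin hout
    O hO μ hμ F' hF' ε θ hθ hθ0 hθ1
end

section
/- For every real θ ∈ (0,1], e^θ/(1+θ)^{1+θ} ≥ e^{−θ}/(1−θ)^{1−θ}, where 0⁰ is interpreted as 1; consequently min{U₁(θ,μ), L₁(θ,μ)} = L₁(θ,μ) for every μ ≥ 0. -/
set_option autoImplicit false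

/-!
Writing `s ^ s = exp (s log s)`, the claim `Y(θ) ≤ X(θ)` becomes
`(1 + θ) log (1 + θ) - (1 - θ) log (1 - θ) ≤ 2θ`. Comparing `log s` with
`sinh (log s) = (s - s⁻¹) / 2` gives `s log s ≤ (s² - 1) / 2` for `s ≥ 1` and the reverse
inequality for `0 ≤ s ≤ 1`; applied at `s = 1 ± θ` the two quadratic bounds differ by exactly
`2θ`.
-/

open Real

namespace Real

lemma mul_log_le_of_one_le {s : ℝ} (hs : 1 ≤ s) : s * log s ≤ (s ^ 2 - 1) / 2 := by
  have hs0 : 0 < s := one_pos.trans_le hs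
  have h : log s ≤ (s - s⁻¹) / 2 := by
    rw [← sinh_log hs0]
    exact self_le_sinh_iff.mpr (log_nonneg hs)
  calc s * log s ≤ s * ((s - s⁻¹) / 2) := mul_le_mul_of_nonneg_left h hs0.le
    _ = (s ^ 2 - 1) / 2 := by field_simp

lemma le_mul_log_of_le_one {s : ℝ} (hs0 : 0 ≤ s) (hs1 : s ≤ 1) :
    (s ^ 2 - 1) / 2 ≤ s * log s := by
  rcases hs0.eq_or_lt with rfl | hs0
  · norm_num
  have h : (s - s⁻¹) / 2 ≤ log s := by
    rw [← sinh_log hs0]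
    exact sinh_le_self_iff.mpr (log_nonpos hs0.le hs1)
  calc (s ^ 2 - 1) / 2 = s * ((s - s⁻¹) / 2) := by field_simp
    _ ≤ s * log s := mul_le_mul_of_nonneg_left h hs0.le

/-- Also at `s = 0`, where both sides are `1` because `0 ^ 0 = 1` and `log 0 = 0`. -/
lemma rpow_self_eq_exp_mul_log {s : ℝ} (hs : 0 ≤ s) : s ^ s = exp (s * log s) := by
  rcases hs.eq_or_lt with rfl | hs
  · simp
  · rw [rpow_def_of_pos hs, mul_comm]

lemma exp_div_rpow_self {s : ℝ} (a : ℝ) (hs : 0 ≤ s) : exp a / s ^ s = exp (a - s * log s) := by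
  rw [rpow_self_eq_exp_mul_log hs, exp_sub]

end Real

/-- Claim 1 in the proof of Theorem 5.1: for every `θ ∈ (0,1]`,
`e^θ/(1+θ)^{1+θ} ≥ e^{−θ}/(1−θ)^{1−θ}` (real exponentiation with `0⁰ = 1`);
consequently `min{U₁(θ,μ), L₁(θ,μ)} = L₁(θ,μ)` for every `μ ≥ 0`, where
`U₁(θ,μ) = (e^θ/(1+θ)^{1+θ})^μ` and `L₁(θ,μ) = (e^{−θ}/(1−θ)^{1−θ})^μ`. -/
theorem chernoff_min_is_lower
    (θ : ℝ) (hθ0 : 0 < θ) (hθ1 : θ ≤ 1) :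
    Real.exp θ / (1 + θ) ^ (1 + θ) ≥ Real.exp (-θ) / (1 - θ) ^ (1 - θ) ∧
    ∀ μ : ℝ, 0 ≤ μ →
      min ((Real.exp θ / (1 + θ) ^ (1 + θ)) ^ μ)
          ((Real.exp (-θ) / (1 - θ) ^ (1 - θ)) ^ μ) =
        (Real.exp (-θ) / (1 - θ) ^ (1 - θ)) ^ μ := by
  have hX : exp θ / (1 + θ) ^ (1 + θ) = exp (θ - (1 + θ) * log (1 + θ)) :=
    exp_div_rpow_self θ (by linarith)
  have hY : exp (-θ) / (1 - θ) ^ (1 - θ) = exp (-θ - (1 - θ) * log (1 - θ)) :=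
    exp_div_rpow_self (-θ) (by linarith)
  have hYX : exp (-θ) / (1 - θ) ^ (1 - θ) ≤ exp θ / (1 + θ) ^ (1 + θ) := by
    rw [hX, hY, exp_le_exp]
    linarith [mul_log_le_of_one_le (s := 1 + θ) (by linarith),
      le_mul_log_of_le_one (s := 1 - θ) (by linarith) (by linarith)]
  refine ⟨hYX, fun μ hμ => min_eq_right (rpow_le_rpow ?_ hYX hμ)⟩
  rw [hY]
  positivity
end

section
/- Let p ∈ (0,1), let m ≥ 1 and n ≥ 1 be integers, let I be a nonempty finite index set, and let f : I → ℝ satisfy 0 < f_x ≤ 1 for all x ∈ I and Σ_{x∈I} f_x = 1. Let F = max_{x∈I} f_x, W = F·p + (1-p)/m, and Θ = ε·p·F/W. For each x ∈ I set w_x = f_x·p + (1-p)/m, θ_x = ε·p·f_x/w_x, and μ_x = n·w_x. Let ε ∈ (0, 1 + ((1-p)/m)/(p·F)] and δ ∈ (0,1). Then: for every x ∈ I, δ ≤ min{(e^{θ_x}/(1+θ_x)^{1+θ_x})^{μ_x}, (e^{−θ_x}/(1−θ_x)^{1−θ_x})^{μ_x}} (with 0⁰ = 1) holds if and only if n ≤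 ln δ / (W · ln(e^{−Θ}/(1−Θ)^{1−Θ})). -/
set_option autoImplicit false

/-! Both Chernoff bounds are `exp (-μ · h (±θ))` for the rate `h t = t + (1 - t) log (1 - t)`,
and `h (-θ) ≤ h θ` on `[0, 1]`, so only the lower bound matters: the condition for the value `x`
reads `n · w_x · h θ_x ≤ -ln δ`. Both `w_x` and `θ_x` grow with `f_x`, and `h` is increasing and
positive on `(0, 1]`, so the most frequent value gives the binding constraint. -/

open Real Set

noncomputable def chernoffRate (t : ℝ) : ℝ := t + (1 - t) * log (1 - t)

lemma chernoffRate_zero : chernoffRate 0 = 0 := by simp [chernoffRate]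

lemma continuous_chernoffRate : Continuous chernoffRate :=
  continuous_id.add (continuous_mul_log.comp (continuous_const.sub continuous_id))

lemma hasDerivAt_chernoffRate {t : ℝ} (ht : t ≠ 1) :
    HasDerivAt chernoffRate (-log (1 - t)) t := by
  have h := (hasDerivAt_mul_log (sub_ne_zero.mpr ht.symm)).comp t ((hasDerivAt_id t).const_sub 1)
  exact ((hasDerivAt_id t).add h).congr_deriv (by ring)

lemma strictMonoOn_chernoffRate : StrictMonoOn chernoffRate (Icc 0 1) := by
  refine strictMonoOn_of_deriv_pos (convex_Icc 0 1) continuous_chernoffRate.continuousOn ?_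
  rw [interior_Icc]
  rintro t ⟨ht0, ht1⟩
  rw [(hasDerivAt_chernoffRate ht1.ne).deriv, neg_pos]
  exact log_neg (by linarith) (by linarith)

lemma chernoffRate_pos {t : ℝ} (ht0 : 0 < t) (ht1 : t ≤ 1) : 0 < chernoffRate t :=
  chernoffRate_zero ▸ strictMonoOn_chernoffRate ⟨le_rfl, zero_le_one⟩ ⟨ht0.le, ht1⟩ ht0

lemma mul_chernoffRate_le_mul_chernoffRate {a b s t : ℝ} (hab : a ≤ b) (hb : 0 ≤ b)
    (hs : 0 ≤ s) (hst : s ≤ t) (ht : t ≤ 1) :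
    a * chernoffRate s ≤ b * chernoffRate t := by
  have hs_nonneg : 0 ≤ chernoffRate s := chernoffRate_zero ▸
    strictMonoOn_chernoffRate.monotoneOn ⟨le_rfl, zero_le_one⟩ ⟨hs, hst.trans ht⟩ hs
  exact mul_le_mul hab
    (strictMonoOn_chernoffRate.monotoneOn ⟨hs, hst.trans ht⟩ ⟨hs.trans hst, ht⟩ hst) hs_nonneg hb

lemma chernoffRate_neg_le {t : ℝ} (ht0 : 0 ≤ t) (ht1 : t ≤ 1) :
    chernoffRate (-t) ≤ chernoffRate t := by
  set g := fun s => chernoffRate s - chernoffRate (-s)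
  have hderiv : ∀ s ∈ Ioo (0 : ℝ) 1, HasDerivAt g (-log ((1 - s) * (1 + s))) s := by
    rintro s ⟨hs0, hs1⟩
    have hneg := (hasDerivAt_chernoffRate (t := -s) (by linarith)).comp s (hasDerivAt_neg s)
    refine ((hasDerivAt_chernoffRate hs1.ne).sub hneg).congr_deriv ?_
    rw [log_mul (by linarith) (by linarith), sub_neg_eq_add]
    ring
  have hmono : MonotoneOn g (Icc 0 1) := by
    refine monotoneOn_of_hasDerivWithinAt_nonneg (f' := fun s => -log ((1 - s) * (1 + s)))
      (convex_Icc 0 1)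
      (continuous_chernoffRate.sub (continuous_chernoffRate.comp continuous_neg)).continuousOn
      ?_ ?_ <;> rw [interior_Icc]
    · exact fun s hs => (hderiv s hs).hasDerivWithinAt
    · rintro s ⟨hs0, hs1⟩
      exact neg_nonneg.mpr (log_nonpos (by nlinarith) (by nlinarith))
  simpa [g, chernoffRate_zero] using hmono ⟨le_rfl, zero_le_one⟩ ⟨ht0, ht1⟩ ht0

lemma exp_neg_div_rpow_eq {t : ℝ} (ht : t ≤ 1) :
    exp (-t) / (1 - t) ^ (1 - t) = exp (-chernoffRate t) := by
  rcases ht.eq_or_lt with rfl | ht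
  · simp [chernoffRate]
  · rw [rpow_def_of_pos (sub_pos.mpr ht), ← exp_sub, chernoffRate]
    congr 1
    ring

lemma min_chernoffBounds_eq {t μ : ℝ} (ht0 : 0 ≤ t) (ht1 : t ≤ 1) (hμ : 0 ≤ μ) :
    min ((exp t / (1 + t) ^ (1 + t)) ^ μ) ((exp (-t) / (1 - t) ^ (1 - t)) ^ μ) =
      exp (-(μ * chernoffRate t)) := by
  have hupper : exp t / (1 + t) ^ (1 + t) = exp (-chernoffRate (-t)) := by
    simpa using exp_neg_div_rpow_eq (t := -t) (by linarith)
  rw [hupper, exp_neg_div_rpow_eq ht1, ← exp_mul, ← exp_mul, min_eq_right]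
  · congr 1
    ring
  · exact exp_le_exp.mpr (by nlinarith [chernoffRate_neg_le ht0 ht1])

lemma le_min_chernoffBounds_iff {t μ δ : ℝ} (ht0 : 0 ≤ t) (ht1 : t ≤ 1) (hμ : 0 ≤ μ)
    (hδ : 0 < δ) :
    δ ≤ min ((exp t / (1 + t) ^ (1 + t)) ^ μ) ((exp (-t) / (1 - t) ^ (1 - t)) ^ μ) ↔
      μ * chernoffRate t ≤ -log δ := by
  rw [min_chernoffBounds_eq ht0 ht1 hμ, ← log_le_iff_le_exp hδ, le_neg]

lemma mul_div_mul_add_le_of_le {k a c x y : ℝ} (hk : 0 ≤ k) (hc : 0 ≤ c) (hx : 0 < x * a + c)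
    (hy : 0 < y * a + c) (hxy : x ≤ y) :
    k * x / (x * a + c) ≤ k * y / (y * a + c) := by
  rw [div_le_div_iff₀ hx hy]
  nlinarith [mul_nonneg (mul_nonneg hk hc) (sub_nonneg.mpr hxy)]

lemma mul_mul_div_mul_add_le_one {ε p c F : ℝ} (hp : 0 < p) (hF : 0 < F) (hc : 0 ≤ c)
    (hε : ε ≤ 1 + c / (p * F)) :
    ε * p * F / (F * p + c) ≤ 1 := by
  rw [div_le_one (by positivity)]
  have h := (le_div_iff₀ (by positivity)).mp (show ε - 1 ≤ c / (p * F) by linarith)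
  linarith

theorem reconstruction_privacy_iff_size_full_general
    (p : ℝ) (hp0 : 0 < p) (hp1 : p < 1)
    (m : ℕ) (n : ℕ)
    {I : Type*} [Fintype I] [Nonempty I]
    (f : I → ℝ) (hf0 : ∀ x, 0 < f x)
    (ε δ : ℝ)
    (F : ℝ) (hF : F = Finset.univ.sup' Finset.univ_nonempty f)
    (W Θ : ℝ) (hW : W = F * p + (1 - p) / m) (hΘ : Θ = ε * p * F / W)
    (w θ μ : I → ℝ)
    (hw : ∀ x, w x = f x * p + (1 - p) / m)
    (hθ : ∀ x, θ x = ε * p * f x / w x)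
    (hμ : ∀ x, μ x = n * w x)
    (hε0 : 0 < ε) (hε1 : ε ≤ 1 + ((1 - p) / m) / (p * F))
    (hδ0 : 0 < δ) :
    (∀ x : I,
        δ ≤ min ((Real.exp (θ x) / (1 + θ x) ^ (1 + θ x)) ^ μ x)
                ((Real.exp (-θ x) / (1 - θ x) ^ (1 - θ x)) ^ μ x)) ↔
      (n : ℝ) ≤ Real.log δ / (W * Real.log (Real.exp (-Θ) / (1 - Θ) ^ (1 - Θ))) := by
  have hc : 0 ≤ (1 - p) / m := div_nonneg (by linarith) m.cast_nonneg
  obtain ⟨x₀, -, hx₀⟩ := Finset.exists_mem_eq_sup' Finset.univ_nonempty f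
  rw [hx₀] at hF
  subst hF
  have hf_le : ∀ x, f x ≤ f x₀ := fun x => hx₀ ▸ Finset.le_sup' f (Finset.mem_univ x)
  have hw0 : ∀ x, 0 < w x := fun x => hw x ▸ add_pos_of_pos_of_nonneg (mul_pos (hf0 x) hp0) hc
  have hθ_le : ∀ x, θ x ≤ θ x₀ := fun x => by
    rw [hθ, hθ, hw, hw]
    exact mul_div_mul_add_le_of_le (by positivity) hc (hw x ▸ hw0 x) (hw x₀ ▸ hw0 x₀) (hf_le x)
  have hθ0 : ∀ x, 0 < θ x := fun x => hθ x ▸ div_pos (by have := hf0 x; positivity) (hw0 x)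
  have hθ1 : θ x₀ ≤ 1 := hθ x₀ ▸ hw x₀ ▸ mul_mul_div_mul_add_le_one hp0 (hf0 x₀) hc hε1
  have hrate_le : ∀ x, w x * chernoffRate (θ x) ≤ w x₀ * chernoffRate (θ x₀) := fun x =>
    mul_chernoffRate_le_mul_chernoffRate (by rw [hw, hw]; nlinarith [hf_le x]) (hw0 x₀).le
      (hθ0 x).le (hθ_le x) hθ1
  have hkey : ∀ x, δ ≤ min ((exp (θ x) / (1 + θ x) ^ (1 + θ x)) ^ μ x)
      ((exp (-θ x) / (1 - θ x) ^ (1 - θ x)) ^ μ x) ↔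
        n * (w x * chernoffRate (θ x)) ≤ -log δ := fun x => by
    rw [le_min_chernoffBounds_iff (hθ0 x).le ((hθ_le x).trans hθ1)
      (hμ x ▸ mul_nonneg n.cast_nonneg (hw0 x).le) hδ0, hμ, mul_assoc]
  have hWx₀ : W = w x₀ := by rw [hW, hw]
  have hΘx₀ : Θ = θ x₀ := by rw [hΘ, hθ, hWx₀]
  subst hWx₀ hΘx₀
  rw [exp_neg_div_rpow_eq hθ1, log_exp, mul_neg, div_neg, ← neg_div,
    le_div_iff₀ (mul_pos (hw0 x₀) (chernoffRate_pos (hθ0 x₀) hθ1))]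
  exact ⟨fun h => (hkey x₀).1 (h x₀),
    fun h x => (hkey x).2 ((mul_le_mul_of_nonneg_left (hrate_le x) n.cast_nonneg).trans h)⟩

/-- Theorem 5.1: with the full Chernoff bounds, a micro group of `n` records with value
frequencies `f_x` (each in `(0,1]`, summing to `1`), maximum frequency `F`,
`W = F·p + (1-p)/m`, `Θ = ε·p·F/W`, and per-value `w_x = f_x·p + (1-p)/m`,
`θ_x = ε·p·f_x/w_x`, `μ_x = n·w_x`, satisfies
`δ ≤ min{(e^{θ_x}/(1+θ_x)^{1+θ_x})^{μ_x}, (e^{−θ_x}/(1−θ_x)^{1−θ_x})^{μ_x}}` for every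
value `x` if and only if `n ≤ ln δ / (W · ln(e^{−Θ}/(1−Θ)^{1−Θ}))`
(real exponentiation with `0⁰ = 1`). -/
theorem reconstruction_privacy_iff_size_full
    (p : ℝ) (hp0 : 0 < p) (hp1 : p < 1)
    (m : ℕ) (hm : 1 ≤ m) (n : ℕ) (hn : 1 ≤ n)
    {I : Type*} [Fintype I] [Nonempty I]
    (f : I → ℝ) (hf0 : ∀ x, 0 < f x) (hf1 : ∀ x, f x ≤ 1)
    (hsum : ∑ x, f x = 1)
    (ε δ : ℝ)
    (F : ℝ) (hF : F = Finset.univ.sup' Finset.univ_nonempty f)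
    (W Θ : ℝ) (hW : W = F * p + (1 - p) / m) (hΘ : Θ = ε * p * F / W)
    (w θ μ : I → ℝ)
    (hw : ∀ x, w x = f x * p + (1 - p) / m)
    (hθ : ∀ x, θ x = ε * p * f x / w x)
    (hμ : ∀ x, μ x = n * w x)
    (hε0 : 0 < ε) (hε1 : ε ≤ 1 + ((1 - p) / m) / (p * F))
    (hδ0 : 0 < δ) (hδ1 : δ < 1) :
    (∀ x : I,
        δ ≤ min ((Real.exp (θ x) / (1 + θ x) ^ (1 + θ x)) ^ μ x)
                ((Real.exp (-θ x) / (1 - θ x) ^ (1 - θ x)) ^ μ x)) ↔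
      (n : ℝ) ≤ Real.log δ / (W * Real.log (Real.exp (-Θ) / (1 - Θ) ^ (1 - Θ))) :=
  reconstruction_privacy_iff_size_full_general p hp0 hp1 m n f hf0 ε δ F hF W Θ hW hΘ w θ μ hw hθ hμ
    hε0 hε1 hδ0
end

section
/- Let p ∈ (0,1), let m ≥ 1 and n ≥ 1 be integers, let I be a nonempty finite index set, and let f : I → ℝ satisfy 0 < f_x ≤ 1 for all x ∈ I and Σ_{x∈I} f_x = 1. Let F = max_{x∈I} f_x, W = F·p + (1-p)/m, and Θ = ε·p·F/W. For each x ∈ I set w_x = f_x·p + (1-p)/m, θ_x = ε·p·f_x/w_x, and μ_x = n·w_x. Let ε ∈ (0, 1 + ((1-p)/m)/(p·F)] and δ ∈ (0,1). Then: for every x ∈ I, δ ≤ min{exp(−θ_x²·μ_x/(2+θ_x)), exp(−θ_x²·μ_x/2)} holds if and only if n ≤ −2·ln δ / (W · Θ²). -/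
/-!
The Chernoff exponent of value `x` is `θ_x² μ_x = n (ε p)² f_x² / (f_x p + c)` with
`c = (1 - p)/m ≥ 0`. Since `θ_x ≥ 0`, the binding bound is always `L₂`, and `δ ≤ L₂` says exactly
that this exponent is at most `-2 ln δ`. The map `t ↦ t² / (t p + c)` is increasing on `t ≥ 0`,
so the exponent is largest at the most frequent value, where it equals `n W Θ²`.
-/

open Real

lemma sq_div_mul_add_le_of_le {a b p c : ℝ} (ha : 0 ≤ a) (hab : a ≤ b) (hp : 0 ≤ p)
    (hc : 0 ≤ c) (hpos : 0 < a * p + c) : a ^ 2 / (a * p + c) ≤ b ^ 2 / (b * p + c) := by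
  have hb : 0 < b * p + c := by nlinarith
  rw [div_le_div_iff₀ hpos hb]
  nlinarith [mul_nonneg (mul_nonneg (mul_nonneg ha (ha.trans hab)) hp) (sub_nonneg.2 hab),
    mul_nonneg hc (mul_nonneg (sub_nonneg.2 hab) (add_nonneg ha (ha.trans hab)))]

lemma div_sq_mul_self (k a d : ℝ) (hd : d ≠ 0) : (k * a / d) ^ 2 * d = k ^ 2 * (a ^ 2 / d) := by
  field_simp

lemma div_sq_mul_self_le_of_le (k : ℝ) {a b p c : ℝ} (ha : 0 ≤ a) (hab : a ≤ b) (hp : 0 ≤ p)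
    (hc : 0 ≤ c) (hpos : 0 < a * p + c) :
    (k * a / (a * p + c)) ^ 2 * (a * p + c) ≤ (k * b / (b * p + c)) ^ 2 * (b * p + c) := by
  have hb : 0 < b * p + c := by nlinarith
  rw [div_sq_mul_self _ _ _ hpos.ne', div_sq_mul_self _ _ _ hb.ne']
  exact mul_le_mul_of_nonneg_left (sq_div_mul_add_le_of_le ha hab hp hc hpos) (sq_nonneg k)

lemma le_min_chernoff_iff {δ θ μ : ℝ} (hδ : 0 < δ) (hθ : 0 ≤ θ) (hμ : 0 ≤ μ) :
    δ ≤ min (exp (-θ ^ 2 * μ / (2 + θ))) (exp (-θ ^ 2 * μ / 2)) ↔ θ ^ 2 * μ ≤ -2 * log δ := by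
  have hexp : exp (-θ ^ 2 * μ / 2) ≤ exp (-θ ^ 2 * μ / (2 + θ)) := by
    rw [exp_le_exp, neg_mul, neg_div, neg_div, neg_le_neg_iff]
    exact div_le_div_of_nonneg_left (by positivity) two_pos (by linarith)
  rw [min_eq_right hexp, ← log_le_iff_le_exp hδ]
  constructor <;> intro h <;> linarith

theorem reconstruction_privacy_iff_size_simplified_general
    (p : ℝ) (hp0 : 0 < p) (hp1 : p < 1)
    (m : ℕ) (n : ℕ)
    {I : Type*} [Fintype I] [Nonempty I]
    (f : I → ℝ) (hf0 : ∀ x, 0 < f x)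
    (ε δ : ℝ)
    (F : ℝ) (hF : F = Finset.univ.sup' Finset.univ_nonempty f)
    (W Θ : ℝ) (hW : W = F * p + (1 - p) / m) (hΘ : Θ = ε * p * F / W)
    (w θ μ : I → ℝ)
    (hw : ∀ x, w x = f x * p + (1 - p) / m)
    (hθ : ∀ x, θ x = ε * p * f x / w x)
    (hμ : ∀ x, μ x = n * w x)
    (hε0 : 0 < ε)
    (hδ0 : 0 < δ) :
    (∀ x : I,
        δ ≤ min (Real.exp (-(θ x) ^ 2 * μ x / (2 + θ x)))
                (Real.exp (-(θ x) ^ 2 * μ x / 2))) ↔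
      (n : ℝ) ≤ -2 * Real.log δ / (W * Θ ^ 2) := by
  obtain ⟨x₀, -, hx₀⟩ := Finset.exists_mem_eq_sup' Finset.univ_nonempty f
  have hc : 0 ≤ (1 - p) / (m : ℝ) := div_nonneg (by linarith) m.cast_nonneg
  have hw0 : ∀ x, 0 < w x := fun x => hw x ▸ add_pos_of_pos_of_nonneg (mul_pos (hf0 x) hp0) hc
  have hexp : ∀ x, θ x ^ 2 * μ x = n * (θ x ^ 2 * w x) := fun x => by rw [hμ x]; ring
  have hmax : ∀ x, θ x ^ 2 * w x ≤ W * Θ ^ 2 := fun x => by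
    rw [mul_comm W, hθ x, hw x, hΘ, hW]
    exact div_sq_mul_self_le_of_le _ (hf0 x).le
      (hF ▸ Finset.le_sup' f (Finset.mem_univ x))
      hp0.le hc (hw x ▸ hw0 x)
  have hFx₀ : F = f x₀ := hF.trans hx₀
  have hwx₀ : w x₀ = W := by rw [hw, hW, hFx₀]
  have hattained : θ x₀ ^ 2 * w x₀ = W * Θ ^ 2 := by rw [hθ, hΘ, hwx₀, hFx₀, mul_comm]
  have hpos : 0 < W * Θ ^ 2 := by
    have := hwx₀ ▸ hw0 x₀
    have := hFx₀ ▸ hf0 x₀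
    rw [hΘ]
    positivity
  have hθ0 : ∀ x, 0 ≤ θ x := fun x => by rw [hθ]; have := hw0 x; have := hf0 x; positivity
  have hμ0 : ∀ x, 0 ≤ μ x := fun x => hμ x ▸ mul_nonneg n.cast_nonneg (hw0 x).le
  simp only [le_min_chernoff_iff hδ0 (hθ0 _) (hμ0 _), hexp, le_div_iff₀ hpos]
  exact ⟨fun h => hattained ▸ h x₀,
    fun h x => (mul_le_mul_of_nonneg_left (hmax x) n.cast_nonneg).trans h⟩

/-- Theorem 5.2: with the simplified Chernoff bounds, a micro group of `n` records with
value frequencies `f_x` (each in `(0,1]`, summing to `1`), maximum frequency `F`,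
`W = F·p + (1-p)/m`, `Θ = ε·p·F/W`, and per-value `w_x = f_x·p + (1-p)/m`,
`θ_x = ε·p·f_x/w_x`, `μ_x = n·w_x`, satisfies
`δ ≤ min{exp(−θ_x²·μ_x/(2+θ_x)), exp(−θ_x²·μ_x/2)}` for every value `x` if and only if
`n ≤ −2·ln δ / (W·Θ²)`. -/
theorem reconstruction_privacy_iff_size_simplified
    (p : ℝ) (hp0 : 0 < p) (hp1 : p < 1)
    (m : ℕ) (hm : 1 ≤ m) (n : ℕ) (hn : 1 ≤ n)
    {I : Type*} [Fintype I] [Nonempty I]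
    (f : I → ℝ) (hf0 : ∀ x, 0 < f x) (hf1 : ∀ x, f x ≤ 1)
    (hsum : ∑ x, f x = 1)
    (ε δ : ℝ)
    (F : ℝ) (hF : F = Finset.univ.sup' Finset.univ_nonempty f)
    (W Θ : ℝ) (hW : W = F * p + (1 - p) / m) (hΘ : Θ = ε * p * F / W)
    (w θ μ : I → ℝ)
    (hw : ∀ x, w x = f x * p + (1 - p) / m)
    (hθ : ∀ x, θ x = ε * p * f x / w x)
    (hμ : ∀ x, μ x = n * w x)
    (hε0 : 0 < ε) (hε1 : ε ≤ 1 + ((1 - p) / m) / (p * F))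
    (hδ0 : 0 < δ) (hδ1 : δ < 1) :
    (∀ x : I,
        δ ≤ min (Real.exp (-(θ x) ^ 2 * μ x / (2 + θ x)))
                (Real.exp (-(θ x) ^ 2 * μ x / 2))) ↔
      (n : ℝ) ≤ -2 * Real.log δ / (W * Θ ^ 2) :=
  reconstruction_privacy_iff_size_simplified_general p hp0 hp1 m n f hf0 ε δ F hF W Θ hW hΘ w θ μ hw
    hθ hμ hε0 hδ0
end
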